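/- arXiv:0710.4790 — 2 statements merged into one kernel-verified Lean document; each statement's English description precedes it below -/
import Mathlib

section
/- Let n ≥ 1, let μ be a finite Borel measure on ℝⁿ with compact support, and let f : ℝⁿ → ℂ be in L¹(μ). Define g(x) := ∫_{ℝⁿ} f(s) e^{−i⟨s,x⟩} dμ(s) for x ∈ ℝⁿ. If the set {x ∈ ℝⁿ : g(x) = 0} has positive Lebesgue measure, then g(x) = 0 for every x ∈ ℝⁿ. -/
/-!
Since `g` is continuous, its zero set `Z` is closed and has positive Lebesgue measure. Polar
coordinates centred at an arbitrary point `y` produce a unit vector `v` such that the line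
`t ↦ y + t • v` meets `Z` in a set of positive length. Because `μ` has compact support,
`t ↦ g (y + t • v)` is the restriction to `ℝ` of the entire function
`z ↦ ∫ f(s) e^{-i⟨s,y⟩} e^{-i z ⟨s,v⟩} dμ(s)`. The real zeros of this function have positive
measure, hence an accumulation point, so it vanishes identically by the identity theorem; at `z = 0`
this gives `g y = 0`.
-/

open MeasureTheory Complex Set Metric Filter

section PolarCoordinates

variable {E : Type*} [NormedAddCommGroup E] [NormedSpace ℝ E] [MeasurableSpace E]
  [BorelSpace E] [FiniteDimensional ℝ E] [Nontrivial E] (μ : Measure E) [μ.IsAddHaarMeasure]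

theorem measure_eq_zero_of_forall_ray_null {B : Set E} (hB : MeasurableSet B)
    (h : ∀ v ∈ sphere (0 : E) 1, volume {t : ℝ | 0 < t ∧ t • v ∈ B} = 0) : μ B = 0 := by
  set D := (homeomorphUnitSphereProd E).symm ⁻¹' (Subtype.val ⁻¹' B)
  have hD : MeasurableSet D :=
    (hB.preimage measurable_subtype_coe).preimage (homeomorphUnitSphereProd E).symm.measurable
  have hBD : μ B = (μ.toSphere.prod (Measure.volumeIoiPow (Module.finrank ℝ E - 1))) D := by
    calc μ B = μ (B \ {0}) := (measure_sdiff_null (measure_singleton 0)).symm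
    _ = μ.comap Subtype.val (Subtype.val ⁻¹' B : Set ({0}ᶜ : Set E)) := by
      rw [comap_subtype_coe_apply (measurableSet_singleton 0).compl, Subtype.image_preimage_coe,
        sdiff_eq, inter_comm]
    _ = _ := by
      rw [← (Measure.measurePreserving_homeomorphUnitSphereProd μ).measure_preimage
        hD.nullMeasurableSet, ← preimage_comp, Homeomorph.symm_comp_self, preimage_id]
  rw [hBD, Measure.prod_apply hD, lintegral_eq_zero_iff (measurable_measure_prodMk_left hD)]
  refine Eventually.of_forall fun v => withDensity_absolutelyContinuous _ _ ?_
  rw [comap_subtype_coe_apply measurableSet_Ioi]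
  refine measure_mono_null ?_ (h v v.2)
  rintro _ ⟨r, hr, rfl⟩
  exact ⟨r.2, by simpa [D] using hr⟩

theorem exists_norm_eq_one_volume_line_pos {B : Set E} (hB : MeasurableSet B) (hB0 : 0 < μ B)
    (y : E) : ∃ v : E, ‖v‖ = 1 ∧ 0 < volume {t : ℝ | y + t • v ∈ B} := by
  by_contra! h
  have := measure_eq_zero_of_forall_ray_null μ (hB.preimage (measurable_const_add y))
    fun v hv => measure_mono_null (fun t ht => ht.2)
      (nonpos_iff_eq_zero.1 (h v (by simpa using hv)))
  rw [measure_preimage_add] at this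
  exact hB0.ne' this

end PolarCoordinates

theorem differentiable_integral_mul_cexp_mul {α : Type*} [MeasurableSpace α] {μ : Measure α}
    {F b : α → ℂ} (hF : Integrable F μ) (hb : AEStronglyMeasurable b μ) {C : ℝ}
    (hC : ∀ᵐ s ∂μ, ‖b s‖ ≤ C) :
    Differentiable ℂ fun z => ∫ s, F s * cexp (z * b s) ∂μ := by
  intro z₀
  have hexp_meas : ∀ z : ℂ, AEStronglyMeasurable (fun s => cexp (z * b s)) μ := fun z =>
    continuous_exp.comp_aestronglyMeasurable (hb.const_mul z)
  have hexp_le : ∀ s, ‖b s‖ ≤ C → ∀ z ∈ ball z₀ 1,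
      ‖cexp (z * b s)‖ ≤ Real.exp ((‖z₀‖ + 1) * C) := fun s hs z hz => by
    refine (norm_exp_le_exp_norm _).trans (Real.exp_le_exp.2 ?_)
    rw [norm_mul]
    exact mul_le_mul (norm_le_norm_add_const_of_dist_le (le_of_lt hz)) hs (norm_nonneg _)
      (by positivity)
  have hderiv_le : ∀ᵐ s ∂μ, ∀ z ∈ ball z₀ 1,
      ‖F s * (cexp (z * b s) * b s)‖ ≤ ‖F s‖ * (Real.exp ((‖z₀‖ + 1) * C) * C) := by
    filter_upwards [hC] with s hs z hz
    rw [norm_mul, norm_mul]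
    exact mul_le_mul_of_nonneg_left (mul_le_mul (hexp_le s hs z hz) hs (norm_nonneg _)
      (Real.exp_nonneg _)) (norm_nonneg _)
  have hderiv : ∀ᵐ s ∂μ, ∀ z ∈ ball z₀ 1,
      HasDerivAt (fun z => F s * cexp (z * b s)) (F s * (cexp (z * b s) * b s)) z :=
    Eventually.of_forall fun s z _ => ((hasDerivAt_mul_const (b s)).cexp).const_mul (F s)
  have hint : Integrable (fun s => F s * cexp (z₀ * b s)) μ := by
    refine (hF.norm.mul_const (Real.exp ((‖z₀‖ + 1) * C))).mono' (hF.1.mul (hexp_meas z₀)) ?_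
    filter_upwards [hC] with s hs
    rw [norm_mul]
    exact mul_le_mul_of_nonneg_left (hexp_le s hs z₀ (mem_ball_self one_pos)) (norm_nonneg _)
  exact (hasDerivAt_integral_of_dominated_loc_of_deriv_le (ball_mem_nhds z₀ one_pos)
    (Eventually.of_forall fun z => hF.1.mul (hexp_meas z)) hint
    (hF.1.mul ((hexp_meas z₀).mul hb)) hderiv_le
    (hF.norm.mul_const _) hderiv).2.differentiableAt

theorem Differentiable.eq_zero_of_volume_real_zeros_pos {G : ℂ → ℂ} (hG : Differentiable ℂ G)
    (h : 0 < volume {t : ℝ | G t = 0}) : G = 0 := by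
  obtain ⟨t₀, ht₀⟩ := exists_accPt_of_nullSingletonClass h
  have hacc := ht₀.map continuous_ofReal.continuousAt ofReal_injective
  rw [map_principal, accPt_iff_frequently_nhdsNE] at hacc
  refine (eqOn_univ _ _).1 (AnalyticOnNhd.eqOn_zero_of_preconnected_of_frequently_eq_zero
    (fun z _ => hG.analyticAt z) isPreconnected_univ (mem_univ (t₀ : ℂ)) (hacc.mono ?_))
  rintro _ ⟨t, ht, rfl⟩
  exact ht

section FourierTransform

variable {E : Type*} [NormedAddCommGroup E] [InnerProductSpace ℝ E] [MeasurableSpace E]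
  [BorelSpace E] {μ : Measure E} {f : E → ℂ}

theorem norm_cexp_neg_I_mul_ofReal (r : ℝ) : ‖cexp (-I * r)‖ = 1 := by
  rw [neg_mul, ← mul_neg, ← ofReal_neg, norm_exp_I_mul_ofReal]

theorem continuous_integral_mul_cexp_inner (hf : Integrable f μ) :
    Continuous fun x => ∫ s, f s * cexp (-I * ((inner ℝ s x : ℝ) : ℂ)) ∂μ := by
  refine continuous_of_dominated (bound := fun s => ‖f s‖) (fun x => hf.1.mul ?_)
    (fun x => Eventually.of_forall fun s => ?_) hf.norm (Eventually.of_forall fun s => ?_)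
  · fun_prop
  · rw [norm_mul, norm_cexp_neg_I_mul_ofReal, mul_one]
  · fun_prop

theorem exists_differentiable_eq_integral_mul_cexp_inner_line {K : Set E} (hK : IsCompact K)
    (hμK : μ Kᶜ = 0) (hf : Integrable f μ) (y v : E) :
    ∃ G : ℂ → ℂ, Differentiable ℂ G ∧
      ∀ t : ℝ, G t = ∫ s, f s * cexp (-I * ((inner ℝ s (y + t • v) : ℝ) : ℂ)) ∂μ := by
  obtain ⟨R, hR⟩ := hK.isBounded.subset_closedBall 0
  have hbound : ∀ᵐ s ∂μ, ‖-I * ((inner ℝ s v : ℝ) : ℂ)‖ ≤ R * ‖v‖ := by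
    filter_upwards [ae_iff.2 hμK] with s hs
    rw [norm_mul, norm_neg, norm_I, one_mul, norm_real, Real.norm_eq_abs]
    exact (abs_real_inner_le_norm s v).trans
      (mul_le_mul_of_nonneg_right (mem_closedBall_zero_iff.1 (hR hs)) (norm_nonneg v))
  refine ⟨fun z => ∫ s, f s * cexp (-I * ((inner ℝ s y : ℝ) : ℂ)) *
      cexp (z * (-I * ((inner ℝ s v : ℝ) : ℂ))) ∂μ,
    differentiable_integral_mul_cexp_mul ?_ (by fun_prop) hbound, fun t => ?_⟩
  · exact hf.mul_bdd (by fun_prop)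
      (Eventually.of_forall fun s => (norm_cexp_neg_I_mul_ofReal _).le)
  · refine integral_congr_ae (Eventually.of_forall fun s => ?_)
    simp only [inner_add_right, real_inner_smul_right]
    push_cast
    rw [mul_assoc, ← exp_add]
    ring_nf

end FourierTransform

theorem stmt2_general (n : ℕ)
    (μ : Measure (EuclideanSpace ℝ (Fin n)))
    (K : Set (EuclideanSpace ℝ (Fin n))) (hK : IsCompact K) (hμK : μ Kᶜ = 0)
    (f : EuclideanSpace ℝ (Fin n) → ℂ) (hf : Integrable f μ)
    (g : EuclideanSpace ℝ (Fin n) → ℂ)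
    (hg : ∀ x, g x = ∫ s, f s * Complex.exp (-Complex.I * ((inner ℝ s x : ℝ) : ℂ)) ∂μ)
    (h0 : 0 < volume {x | g x = 0}) :
    ∀ x, g x = 0 := by
  intro y
  rcases subsingleton_or_nontrivial (EuclideanSpace ℝ (Fin n)) with _ | _
  · obtain ⟨x, hx⟩ := nonempty_of_measure_ne_zero h0.ne'
    rwa [Subsingleton.elim y x]
  have hg_cont : Continuous g := funext hg ▸ continuous_integral_mul_cexp_inner hf
  obtain ⟨v, -, hv⟩ := exists_norm_eq_one_volume_line_pos volume
    (isClosed_eq hg_cont continuous_const).measurableSet h0 y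
  obtain ⟨G, hG, hGg⟩ := exists_differentiable_eq_integral_mul_cexp_inner_line hK hμK hf y v
  have hG0 : G = 0 := hG.eq_zero_of_volume_real_zeros_pos <| by
    simpa only [hGg, ← hg, mem_ofPred_eq] using hv
  simpa only [ofReal_zero, zero_smul, add_zero, ← hg, hG0, Pi.zero_apply] using (hGg 0).symm

/-- If `μ` is a finite compactly supported Borel measure on `ℝⁿ`, `f ∈ L¹(μ)`, and the
Fourier transform `g(x) = ∫ f(s) e^{-i⟨s,x⟩} dμ(s)` vanishes on a set of positive
Lebesgue measure, then `g` vanishes identically. -/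
theorem stmt2 (n : ℕ) (hn : 1 ≤ n)
    (μ : Measure (EuclideanSpace ℝ (Fin n))) [IsFiniteMeasure μ]
    (K : Set (EuclideanSpace ℝ (Fin n))) (hK : IsCompact K) (hμK : μ Kᶜ = 0)
    (f : EuclideanSpace ℝ (Fin n) → ℂ) (hf : Integrable f μ)
    (g : EuclideanSpace ℝ (Fin n) → ℂ)
    (hg : ∀ x, g x = ∫ s, f s * Complex.exp (-Complex.I * ((inner ℝ s x : ℝ) : ℂ)) ∂μ)
    (h0 : 0 < volume {x | g x = 0}) :
    ∀ x, g x = 0 :=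
  stmt2_general n μ K hK hμK f hf g hg h0
end

section
/- Let n ≥ 1 and let V ∈ L¹(ℝⁿ, ℝ) with ∫_{ℝⁿ} V(x) dx < 0. Let μ be a nonzero finite Borel measure on ℝⁿ. Then there exist a point s₀ ∈ ℝⁿ and δ > 0 such that μ(B(s₀, δ)) > 0 and the real part of ∬_{B(s₀,δ) × B(s₀,δ)} V̂(s − s′) dμ(s) dμ(s′) is strictly negative. In particular, there exists f ∈ L²(μ) with Re(∬ V̂(s−s′) conj(f(s)) f(s′) dμ(s) dμ(s′)) < 0. -/
open MeasureTheory Complex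

/-- The Fourier transform of an integrable potential `V` on `ℝⁿ`,
`V̂(ξ) = (2π)^{-n/2} ∫ V(x) e^{-i⟨ξ,x⟩} dx`. -/
noncomputable def fourierSymbol (n : ℕ) (V : EuclideanSpace ℝ (Fin n) → ℝ)
    (ξ : EuclideanSpace ℝ (Fin n)) : ℂ :=
  (((2 * Real.pi) ^ (-(n : ℝ) / 2) : ℝ) : ℂ) *
    ∫ x, (V x : ℂ) * Complex.exp (-Complex.I * ((inner ℝ ξ x : ℝ) : ℂ))

/-! `V̂` is continuous with `Re V̂(0) = (2π)^{-n/2} ∫ V < 0`, so `Re V̂ < Re V̂(0) / 2` on some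
ball `‖ξ‖ < ε`. Any ball `B` of radius `ε / 2` centred in the support of `μ` has positive
measure and `B - B` lies in that ball, so by Fubini the real part of the double integral over
`B × B` is at most `Re V̂(0) / 2 · μ(B)² < 0`. The indicator of `B` is then the required
`f ∈ L²(μ)`. -/

open Metric

lemma re_setIntegral_setIntegral_le {α β : Type*} [MeasurableSpace α] [MeasurableSpace β]
    {μ : Measure α} {ν : Measure β} [IsFiniteMeasure μ] [IsFiniteMeasure ν]
    {s : Set α} {t : Set β} (hs : MeasurableSet s) (ht : MeasurableSet t)
    {f : α × β → ℂ} (hf : IntegrableOn f (s ×ˢ t) (μ.prod ν)) {r : ℝ}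
    (hr : ∀ z ∈ s ×ˢ t, (f z).re ≤ r) :
    (∫ x in s, ∫ y in t, f (x, y) ∂ν ∂μ).re ≤ r * μ.real s * ν.real t := by
  rw [← setIntegral_prod f hf]
  refine (integral_re hf).symm.trans_le ?_
  calc ∫ z in s ×ˢ t, (f z).re ∂μ.prod ν
      ≤ ∫ _ in s ×ˢ t, r ∂μ.prod ν :=
        setIntegral_mono_on hf.re (integrable_const r) (hs.prod ht) hr
    _ = r * μ.real s * ν.real t := by
        rw [setIntegral_const, measureReal_prod_prod, smul_eq_mul]; ring

lemma integral_integral_mul_conj_indicator_mul_indicator {α : Type*} [MeasurableSpace α]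
    {μ : Measure α} {B : Set α} (hB : MeasurableSet B) (K : α → α → ℂ) :
    ∫ s, ∫ s', K s s' * starRingEnd ℂ (B.indicator 1 s) * B.indicator 1 s' ∂μ ∂μ
      = ∫ s in B, ∫ s' in B, K s s' ∂μ ∂μ := by
  have hinner (s : α) : ∫ s', K s s' * starRingEnd ℂ (B.indicator 1 s) * B.indicator 1 s' ∂μ
      = B.indicator (fun s => ∫ s' in B, K s s' ∂μ) s := by
    by_cases hs : s ∈ B
    · simp only [Set.indicator_of_mem hs, Pi.one_apply, map_one, mul_one]
      rw [← integral_indicator hB]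
      congr 1 with s'
      by_cases hs' : s' ∈ B <;> simp [hs']
    · simp [Set.indicator_of_notMem hs]
  simp_rw [hinner]
  exact integral_indicator hB

section

variable {E : Type*} [NormedAddCommGroup E] [ProperSpace E] [MeasurableSpace E] [BorelSpace E]

lemma exists_ball_re_setIntegral_setIntegral_sub_neg (μ : Measure E) [IsFiniteMeasure μ]
    (hμ : μ ≠ 0) {K : E → ℂ} (hK : Continuous K) (hK0 : (K 0).re < 0) :
    ∃ s₀ : E, ∃ δ : ℝ, 0 < δ ∧ 0 < μ (ball s₀ δ) ∧
      (∫ s in ball s₀ δ, ∫ s' in ball s₀ δ, K (s - s') ∂μ ∂μ).re < 0 := by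
  obtain ⟨ε, hε, hKε⟩ : ∃ ε > 0, ∀ ξ : E, dist ξ 0 < ε → (K ξ).re < (K 0).re / 2 :=
    Metric.eventually_nhds_iff.1 <|
      (continuous_re.comp hK).continuousAt.eventually_lt continuousAt_const
        (by simp only [Function.comp_apply]; linarith)
  obtain ⟨s₀, hs₀⟩ := μ.nonempty_support hμ
  set B := ball s₀ (ε / 2)
  have hB : 0 < μ B := (μ.mem_support_iff_forall s₀).1 hs₀ _ (ball_mem_nhds _ (by positivity))
  have hK_le : ∀ z ∈ B ×ˢ B, (K (z.1 - z.2)).re ≤ (K 0).re / 2 := by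
    rintro ⟨s, s'⟩ ⟨hs, hs'⟩
    refine (hKε _ ?_).le
    rw [dist_zero_right, ← dist_eq_norm]
    linarith [dist_triangle_right s s' s₀, mem_ball.1 hs, mem_ball.1 hs']
  have hint : IntegrableOn (fun z : E × E => K (z.1 - z.2)) (B ×ˢ B) (μ.prod μ) :=
    ((hK.comp continuous_sub).continuousOn.integrableOn_compact
      ((isCompact_closedBall s₀ (ε / 2)).prod (isCompact_closedBall s₀ (ε / 2)))).mono_set
      (Set.prod_mono ball_subset_closedBall ball_subset_closedBall)
  have hm : 0 < μ.real B := ENNReal.toReal_pos hB.ne' (measure_ne_top μ B)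
  refine ⟨s₀, ε / 2, by positivity, hB, ?_⟩
  calc _ ≤ (K 0).re / 2 * μ.real B * μ.real B :=
        re_setIntegral_setIntegral_le measurableSet_ball measurableSet_ball hint hK_le
    _ < 0 := mul_neg_of_neg_of_pos (mul_neg_of_neg_of_pos (by linarith) hm) hm

end

lemma continuous_fourierSymbol {n : ℕ} {V : EuclideanSpace ℝ (Fin n) → ℝ} (hV : Integrable V) :
    Continuous (fourierSymbol n V) := by
  refine continuous_const.mul (continuous_of_dominated (bound := fun x => |V x|) ?_ ?_ hV.abs ?_)
  · exact fun ξ => (continuous_ofReal.comp_aestronglyMeasurable hV.1).mul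
      (by fun_prop : Continuous _).aestronglyMeasurable
  · exact fun ξ => .of_forall fun x => by simp [norm_exp]
  · exact .of_forall fun x => by fun_prop

lemma fourierSymbol_zero (n : ℕ) (V : EuclideanSpace ℝ (Fin n) → ℝ) :
    fourierSymbol n V 0 = (((2 * Real.pi) ^ (-(n : ℝ) / 2) * ∫ x, V x : ℝ) : ℂ) := by
  simp only [fourierSymbol, inner_zero_left, ofReal_zero, mul_zero, exp_zero, mul_one,
    integral_complex_ofReal, ofReal_mul]

theorem stmt10_general (n : ℕ)
    (V : EuclideanSpace ℝ (Fin n) → ℝ) (hV : Integrable V)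
    (hVint : (∫ x, V x) < 0)
    (μ : Measure (EuclideanSpace ℝ (Fin n))) [IsFiniteMeasure μ] (hμ : μ ≠ 0) :
    (∃ s₀ : EuclideanSpace ℝ (Fin n), ∃ δ : ℝ, 0 < δ ∧ 0 < μ (Metric.ball s₀ δ) ∧
      (∫ s in Metric.ball s₀ δ, ∫ s' in Metric.ball s₀ δ,
          fourierSymbol n V (s - s') ∂μ ∂μ).re < 0) ∧
    ∃ f : EuclideanSpace ℝ (Fin n) → ℂ, MemLp f 2 μ ∧
      (∫ s, ∫ s',
          fourierSymbol n V (s - s') * (starRingEnd ℂ) (f s) * f s' ∂μ ∂μ).re < 0 := by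
  have hV0 : (fourierSymbol n V 0).re < 0 := by
    rw [fourierSymbol_zero, ofReal_re]
    exact mul_neg_of_pos_of_neg (by positivity) hVint
  obtain ⟨s₀, δ, hδ, hB, hneg⟩ :=
    exists_ball_re_setIntegral_setIntegral_sub_neg μ hμ (continuous_fourierSymbol hV) hV0
  refine ⟨⟨s₀, δ, hδ, hB, hneg⟩, (ball s₀ δ).indicator 1,
    (memLp_const 1).indicator measurableSet_ball, ?_⟩
  rwa [integral_integral_mul_conj_indicator_mul_indicator measurableSet_ball]

/-- If `∫ V < 0` and `μ ≠ 0` is a finite Borel measure, then there is a small ball of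
positive `μ`-measure on which the quadratic form with kernel `V̂(s - s')` is negative;
in particular some `f ∈ L²(μ)` makes the form strictly negative. -/
theorem stmt10 (n : ℕ) (hn : 1 ≤ n)
    (V : EuclideanSpace ℝ (Fin n) → ℝ) (hV : Integrable V)
    (hVint : (∫ x, V x) < 0)
    (μ : Measure (EuclideanSpace ℝ (Fin n))) [IsFiniteMeasure μ] (hμ : μ ≠ 0) :
    (∃ s₀ : EuclideanSpace ℝ (Fin n), ∃ δ : ℝ, 0 < δ ∧ 0 < μ (Metric.ball s₀ δ) ∧
      (∫ s in Metric.ball s₀ δ, ∫ s' in Metric.ball s₀ δ,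
          fourierSymbol n V (s - s') ∂μ ∂μ).re < 0) ∧
    ∃ f : EuclideanSpace ℝ (Fin n) → ℂ, MemLp f 2 μ ∧
      (∫ s, ∫ s',
          fourierSymbol n V (s - s') * (starRingEnd ℂ) (f s) * f s' ∂μ ∂μ).re < 0 :=
  stmt10_general n V hV hVint μ hμ
end
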